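/- Let {S(t) : t ≥ 0} be a semigroup on a metric space (V,d) which possesses a global attractor A in V, and let T > 0. If there is a nonempty bounded absorbing set B ⊆ V such that N^V(S(kT)B, a·q^k) ≤ b·h^k for all integers k ≥ k₀, for some k₀ ∈ ℕ, a,b > 0, q ∈ (0,1) and h ≥ 1, then there exists a countable set E₀ ⊆ B such that M₀ = A ∪ E₀ = cl_V(E₀) ⊆ B is a T-discrete exponential attractor for the semigroup in V, it attracts at every exponential rate ξ ∈ (0, (1/T)·ln(1/q)), and its fractal dimension satisfies dim_f^V(M₀) ≤ log_{1/q} h. -/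

import Mathlib

open Filter Metric Set Topology Bornology
open scoped ENNReal

section Defs

variable {V : Type*} [MetricSpace V]

/-- A semigroup (semiflow) of maps `S t : V → V`, `t ∈ [0,∞)`. -/
def IsSemiflow (S : ℝ → V → V) : Prop :=
  (∀ x : V, S 0 x = x) ∧ ∀ t s : ℝ, 0 ≤ t → 0 ≤ s → ∀ x : V, S t (S s x) = S (t + s) x

/-- One-sided Hausdorff distance `dist^V(G,A) = sup_{x∈G} inf_{y∈A} d(x,y)` (in `ℝ≥0∞`). -/
noncomputable def attrDist (G A : Set V) : ℝ≥0∞ :=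
  ⨆ x ∈ G, EMetric.infEdist x A

/-- The set `A` attracts all bounded subsets of `V`. -/
def AttractsSet (S : ℝ → V → V) (A : Set V) : Prop :=
  ∀ G : Set V, IsBounded G → Tendsto (fun t : ℝ => attrDist (S t '' G) A) atTop (𝓝 0)

/-- A global attractor: nonempty, compact, invariant, attracts all bounded sets. -/
def IsGlobalAttr (S : ℝ → V → V) (A : Set V) : Prop :=
  A.Nonempty ∧ IsCompact A ∧ (∀ t : ℝ, 0 ≤ t → S t '' A = A) ∧ AttractsSet S A

/-- `B` is an absorbing set for the semigroup. -/
def IsAbsorbingSet (S : ℝ → V → V) (B : Set V) : Prop :=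
  ∀ G : Set V, IsBounded G → ∃ tG : ℝ, 0 ≤ tG ∧ ∀ t : ℝ, tG ≤ t → S t '' G ⊆ B

/-- The semigroup is asymptotically closed. -/
def AsympClosed (S : ℝ → V → V) : Prop :=
  ∀ t : ℝ, 0 ≤ t → ∀ tk : ℕ → ℝ, (∀ k, 0 ≤ tk k) → Tendsto tk atTop atTop →
    ∀ xk : ℕ → V, IsBounded (range xk) → ∀ x y : V,
      Tendsto (fun k => S (tk k) (xk k)) atTop (𝓝 x) →
      Tendsto (fun k => S (t + tk k) (xk k)) atTop (𝓝 y) → S t x = y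

/-- The ω-limit set `Λ^V(G) = ⋂_{s ≥ 0} cl_V ⋃_{t ≥ s} S(t)G`. -/
def omegaLim (S : ℝ → V → V) (G : Set V) : Set V :=
  ⋂ (s : ℝ) (_ : 0 ≤ s), closure (⋃ (t : ℝ) (_ : s ≤ t), S t '' G)

/-- `N^V(G,ε)`: minimal number of open `ε`-balls centered in `G` needed to cover `G`. -/
noncomputable def coverN (G : Set V) (ε : ℝ) : ℝ≥0∞ :=
  ⨅ (F : Finset V) (_ : ↑F ⊆ G) (_ : G ⊆ ⋃ x ∈ F, ball x ε), (F.card : ℝ≥0∞)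

open Classical in
/-- Fractal (box-counting) dimension `limsup_{ε→0⁺} log N^V(M,ε) / log (1/ε)`. -/
noncomputable def fracDim (M : Set V) : ℝ≥0∞ :=
  limsup (fun ε : ℝ =>
    if coverN M ε = ⊤ then (⊤ : ℝ≥0∞)
    else ENNReal.ofReal (Real.log (coverN M ε).toReal / Real.log (1 / ε))) (𝓝[>] (0 : ℝ))

/-- `M` attracts all bounded sets at exponential rate `ξ`. -/
def ExpAttractsAt (S : ℝ → V → V) (M : Set V) (ξ : ℝ) : Prop :=
  ∀ G : Set V, IsBounded G →
    Tendsto (fun t : ℝ => ENNReal.ofReal (Real.exp (ξ * t)) * attrDist (S t '' G) M)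
      atTop (𝓝 0)

/-- A `T`-discrete exponential attractor. -/
def IsDiscExpAttr (S : ℝ → V → V) (T : ℝ) (M : Set V) : Prop :=
  M.Nonempty ∧ IsCompact M ∧ S T '' M ⊆ M ∧ fracDim M ≠ ⊤ ∧
    ∃ ξ : ℝ, 0 < ξ ∧ ExpAttractsAt S M ξ

/-- The covering condition `N^V(S(kT)B, a·qᵏ) ≤ b·hᵏ` for `k ≥ k₀`. -/
def CoveringCond (S : ℝ → V → V) (T : ℝ) (B : Set V) (k₀ : ℕ) (a b q h : ℝ) : Prop :=
  ∀ k : ℕ, k₀ ≤ k →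
    coverN (S (k * T) '' B) (a * q ^ k) ≤ ENNReal.ofReal (b * h ^ k)

end Defs

/-
Choose `k₁ ≥ k₀` with `S(t)B ⊆ B` for `t ≥ k₁T` and put `Kₙ = S((k₁+n)T)B`, so that
`S(T)Kₙ = Kₙ₊₁`, `A ⊆ Kₙ ⊆ B`, `Kₘ ⊆ Kₙ` for `m ≥ n + k₁`, and `Kₙ → A`. The covering
condition gives nets `Wₙ ⊆ Kₙ` of mesh `a q^(k₁+n)` with `O(hⁿ)` points. The finite sets
`F₀ = W₀`, `Fₙ₊₁ = Wₙ₊₁ ∪ S(T)Fₙ` satisfy `Fₙ ⊆ Kₙ`, so their union `E₀` lies in `B` and is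
mapped into itself by `S(T)`. Since `Fₙ → A`, the set `A ∪ E₀` is compact, and it is the closure
of `E₀` because the nets `Wₙ` become dense in `A ⊆ Kₙ`. At time `t` a bounded set lies in
`S(νT)B` with `ν ≈ t/T`, hence within `a q^ν` of `E₀`: exponential attraction at every rate
below `ln(1/q)/T`. At scale `a q^(k₁+n)` the set `A ∪ E₀` is covered by the balls around `Wₙ`
(they cover `A` and every `Fₘ` with `m ≥ n + k₁`) together with the points of the `Fₘ`,
`m < n + k₁`: these are `O(n² hⁿ)` balls, so `dim_f ≤ log h / log (1/q)`.
-/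

section Covering

variable {V : Type*} [MetricSpace V]

lemma infEDist_le_attrDist {G M : Set V} {x : V} (hx : x ∈ G) :
    infEDist x M ≤ attrDist G M :=
  le_iSup₂ (f := fun x (_ : x ∈ G) => infEDist x M) x hx

lemma attrDist_le_iff {G M : Set V} {c : ℝ≥0∞} :
    attrDist G M ≤ c ↔ ∀ x ∈ G, infEDist x M ≤ c :=
  iSup₂_le_iff

lemma attrDist_mono_left {G G' M : Set V} (h : G ⊆ G') : attrDist G M ≤ attrDist G' M :=
  biSup_mono h

lemma attrDist_le_of_subset_iUnion_ball {G M : Set V} {F : Set V} {r : ℝ} (hFM : F ⊆ M)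
    (hG : G ⊆ ⋃ x ∈ F, ball x r) : attrDist G M ≤ ENNReal.ofReal r := by
  refine attrDist_le_iff.2 fun x hx => ?_
  obtain ⟨y, hy, hxy⟩ := mem_iUnion₂.1 (hG hx)
  calc infEDist x M ≤ edist x y := infEDist_le_edist_of_mem (hFM hy)
    _ ≤ ENNReal.ofReal r := by
      rw [edist_dist]; exact ENNReal.ofReal_le_ofReal (mem_ball.1 hxy).le

lemma coverN_le_card {G : Set V} {ε : ℝ} (F : Finset V) (hFG : ↑F ⊆ G)
    (hG : G ⊆ ⋃ x ∈ F, ball x ε) : coverN G ε ≤ F.card :=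
  iInf₂_le_of_le F hFG (iInf_le _ hG)

lemma coverN_anti {G : Set V} {ε ε' : ℝ} (h : ε ≤ ε') : coverN G ε' ≤ coverN G ε :=
  le_iInf₂ fun F hFG => le_iInf fun hG =>
    coverN_le_card F hFG (hG.trans (iUnion₂_mono fun _ _ => ball_subset_ball h))

lemma one_le_coverN {G : Set V} (hG : G.Nonempty) (ε : ℝ) : 1 ≤ coverN G ε := by
  refine le_iInf₂ fun F _ => le_iInf fun hcov => ?_
  obtain ⟨y, hy, -⟩ := mem_iUnion₂.1 (hcov hG.some_mem)
  exact_mod_cast Finset.card_pos.2 ⟨y, hy⟩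

lemma exists_finset_of_coverN_lt {G : Set V} {ε : ℝ} {c : ℝ≥0∞} (h : coverN G ε < c) :
    ∃ F : Finset V, ↑F ⊆ G ∧ G ⊆ ⋃ x ∈ F, ball x ε ∧ (F.card : ℝ≥0∞) < c := by
  simp only [coverN, iInf_lt_iff] at h
  obtain ⟨F, hFG, hG, hF⟩ := h
  exact ⟨F, hFG, hG, hF⟩

lemma exists_finset_card_le_of_coverN_le {G : Set V} {ε p : ℝ} (hp : 0 ≤ p)
    (h : coverN G ε ≤ ENNReal.ofReal p) :
    ∃ F : Finset V, ↑F ⊆ G ∧ G ⊆ ⋃ x ∈ F, ball x ε ∧ (F.card : ℝ) ≤ p + 1 := by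
  have hlt : coverN G ε < ENNReal.ofReal (p + 1) := by
    rw [ENNReal.ofReal_add hp zero_le_one, ENNReal.ofReal_one]
    exact h.trans_lt (ENNReal.lt_add_right ENNReal.ofReal_ne_top one_ne_zero)
  obtain ⟨F, hFG, hG, hF⟩ := exists_finset_of_coverN_lt hlt
  refine ⟨F, hFG, hG, ?_⟩
  rw [← ENNReal.ofReal_natCast, ENNReal.ofReal_lt_ofReal_iff_of_nonneg (Nat.cast_nonneg _)] at hF
  exact hF.le

theorem isCompact_union_iUnion_of_tendsto_attrDist {A : Set V} {E : ℕ → Set V}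
    (hA : IsCompact A) (hE : ∀ n, IsCompact (E n))
    (hEA : Tendsto (fun n => attrDist (E n) A) atTop (𝓝 0)) :
    IsCompact (A ∪ ⋃ n, E n) := by
  classical
  -- A finite subcover of `A` covers a thickening of `A`, which contains almost every `E n`.
  refine isCompact_of_finite_subcover fun U hUo hcov => ?_
  obtain ⟨s, hs⟩ := hA.elim_finite_subcover U hUo (subset_union_left.trans hcov)
  choose t ht using fun n =>
    (hE n).elim_finite_subcover U hUo ((subset_iUnion E n).trans subset_union_right |>.trans hcov)
  obtain ⟨δ, hδ, hδU⟩ := hA.exists_thickening_subset_open (isOpen_biUnion fun i _ => hUo i) hs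
  obtain ⟨N, hN⟩ := eventually_atTop.1 (hEA.eventually (gt_mem_nhds (ENNReal.ofReal_pos.2 hδ)))
  refine ⟨s ∪ (Finset.range N).biUnion t, union_subset ?_ (iUnion_subset fun n x hx => ?_)⟩
  · exact hs.trans (biUnion_subset_biUnion_left fun i hi => Finset.mem_union_left _ hi)
  by_cases hn : n < N
  · refine biUnion_subset_biUnion_left (fun i hi => ?_) (ht n hx)
    exact Finset.mem_union_right _ (Finset.mem_biUnion.2 ⟨n, Finset.mem_range.2 hn, hi⟩)
  · have hxδ : x ∈ thickening δ A := mem_thickening_iff_infEDist_lt.2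
      ((infEDist_le_attrDist hx).trans_lt (hN n (not_lt.1 hn)))
    obtain ⟨i, hi, hxi⟩ := mem_iUnion₂.1 (hδU hxδ)
    exact mem_iUnion₂.2 ⟨i, Finset.mem_union_left _ hi, hxi⟩

end Covering

lemma tendsto_log_sq_mul_pow_div {C h : ℝ} (hC : 0 < C) (hh : 0 < h) (k : ℕ) :
    Tendsto (fun n : ℕ => Real.log (((n + k + 1 : ℕ) : ℝ) ^ 2 * C * h ^ (n + k + 1)) / n)
      atTop (𝓝 (Real.log h)) := by
  have hlog : Tendsto (fun n : ℕ => Real.log ((n : ℝ) + k + 1) / n) atTop (𝓝 0) := by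
    have := (Real.tendsto_pow_log_div_mul_add_atTop 1 (-(k + 1)) 1 one_ne_zero).comp
      (tendsto_atTop_add_const_right _ ((k : ℝ) + 1) tendsto_natCast_atTop_atTop)
    refine this.congr fun n => ?_
    simp only [Function.comp_apply, pow_one, one_mul]
    ring_nf
  have hlim := ((hlog.const_mul 2).add (tendsto_const_div_atTop_nhds_zero_nat
    (Real.log C + (k + 1) * Real.log h))).add_const (Real.log h)
  rw [mul_zero, zero_add, zero_add] at hlim
  refine hlim.congr' ?_
  filter_upwards [eventually_ne_atTop 0] with n hn
  have hn' : (n : ℝ) ≠ 0 := Nat.cast_ne_zero.2 hn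
  rw [Real.log_mul (by positivity) (by positivity), Real.log_mul (by positivity) hC.ne',
    Real.log_pow, Real.log_pow]
  push_cast
  field_simp
  ring

lemma sum_range_le_mul_pow {x : ℕ → ℝ} {C h : ℝ} (hC : 0 ≤ C) (hh : 1 ≤ h)
    (hx : ∀ i, x i ≤ C * h ^ i) (N : ℕ) : ∑ i ∈ Finset.range N, x i ≤ N * C * h ^ N := by
  calc ∑ i ∈ Finset.range N, x i ≤ ∑ _i ∈ Finset.range N, C * h ^ N :=
        Finset.sum_le_sum fun i hi => (hx i).trans
          (mul_le_mul_of_nonneg_left (pow_le_pow_right₀ hh (Finset.mem_range.1 hi).le) hC)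
    _ = N * C * h ^ N := by rw [Finset.sum_const, Finset.card_range, nsmul_eq_mul, mul_assoc]

lemma pow_floor_le_exp_mul_log {q : ℝ} (hq0 : 0 < q) (hq1 : q ≤ 1) (x : ℝ) :
    q ^ ⌊x⌋₊ ≤ Real.exp ((x - 1) * Real.log q) := by
  rw [← Real.exp_log (pow_pos hq0 _), Real.log_pow]
  refine Real.exp_le_exp.2 (mul_le_mul_of_nonpos_right ?_ (Real.log_nonpos hq0.le hq1))
  linarith [Nat.lt_floor_add_one x]

lemma mul_pow_ceil_log_div_le {c q ε : ℝ} (hc : 0 < c) (hq0 : 0 < q) (hq1 : q < 1)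
    (hε : 0 < ε) : c * q ^ ⌈Real.log (c / ε) / Real.log (1 / q)⌉₊ ≤ ε := by
  set n := ⌈Real.log (c / ε) / Real.log (1 / q)⌉₊
  have hL : 0 < Real.log (1 / q) := Real.log_pos (one_lt_one_div hq0 hq1)
  have hn : Real.log (c / ε) ≤ n * Real.log (1 / q) := (div_le_iff₀ hL).1 (Nat.le_ceil _)
  rw [Real.log_div hc.ne' hε.ne', one_div, Real.log_inv] at hn
  refine (Real.log_le_log_iff (by positivity) hε).1 ?_
  rw [Real.log_mul hc.ne' (by positivity), Real.log_pow]
  linarith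

lemma ceil_log_div_mul_sub_le {c q ε : ℝ} (hc : 0 < c) (hq0 : 0 < q) (hq1 : q < 1)
    (hε : 0 < ε) (hεc : ε ≤ c) :
    ⌈Real.log (c / ε) / Real.log (1 / q)⌉₊ * Real.log (1 / q) - (Real.log (1 / q) + Real.log c)
      ≤ Real.log (1 / ε) := by
  set n := ⌈Real.log (c / ε) / Real.log (1 / q)⌉₊
  have hL : 0 < Real.log (1 / q) := Real.log_pos (one_lt_one_div hq0 hq1)
  have hy : 0 ≤ Real.log (c / ε) / Real.log (1 / q) :=
    div_nonneg (Real.log_nonneg ((one_le_div hε).2 hεc)) hL.le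
  have hn : (n - 1) * Real.log (1 / q) < Real.log (c / ε) :=
    (lt_div_iff₀ hL).1 (sub_lt_iff_lt_add.2 (Nat.ceil_lt_add_one hy))
  rw [Real.log_div hc.ne' hε.ne'] at hn
  rw [one_div ε, Real.log_inv]
  linarith

section FractalDim

variable {V : Type*} [MetricSpace V]

open Classical in
noncomputable def boxRatio (M : Set V) (ε : ℝ) : ℝ≥0∞ :=
  if coverN M ε = ⊤ then ⊤ else ENNReal.ofReal (Real.log (coverN M ε).toReal / Real.log (1 / ε))

lemma fracDim_eq_limsup_boxRatio (M : Set V) : fracDim M = limsup (boxRatio M) (𝓝[>] 0) := rfl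

lemma boxRatio_le {M : Set V} (hM : M.Nonempty) {ε r p D : ℝ} (hr : r ≤ ε)
    (hcov : coverN M r ≤ ENNReal.ofReal p) (hD : 0 < D) (hDε : D ≤ Real.log (1 / ε)) :
    boxRatio M ε ≤ ENNReal.ofReal (Real.log p / D) := by
  have hN := (coverN_anti hr).trans hcov
  have hN1 := one_le_coverN hM ε
  have hNtop : coverN M ε ≠ ⊤ := ne_top_of_le_ne_top ENNReal.ofReal_ne_top hN
  have hp1 : 1 ≤ p := ENNReal.one_le_ofReal.1 (hN1.trans hN)
  have hNR1 : 1 ≤ (coverN M ε).toReal := by simpa using ENNReal.toReal_mono hNtop hN1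
  have hNRp : (coverN M ε).toReal ≤ p := ENNReal.toReal_le_of_le_ofReal (by linarith) hN
  rw [boxRatio, if_neg hNtop]
  refine ENNReal.ofReal_le_ofReal ?_
  calc Real.log (coverN M ε).toReal / Real.log (1 / ε)
      ≤ Real.log p / Real.log (1 / ε) :=
        div_le_div_of_nonneg_right (Real.log_le_log (by linarith) hNRp) (hD.trans_le hDε).le
    _ ≤ Real.log p / D := div_le_div_of_nonneg_left (Real.log_nonneg hp1) hD hDε

theorem fracDim_le_of_coverN_le_geometric {M : Set V} (hM : M.Nonempty) {c q ℓ : ℝ}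
    {P : ℕ → ℝ} (hc : 0 < c) (hq0 : 0 < q) (hq1 : q < 1)
    (hcov : ∀ᶠ n in atTop, coverN M (c * q ^ n) ≤ ENNReal.ofReal (P n))
    (hP : Tendsto (fun n : ℕ => Real.log (P n) / n) atTop (𝓝 ℓ)) :
    fracDim M ≤ ENNReal.ofReal (ℓ / Real.log (1 / q)) := by
  set L := Real.log (1 / q)
  have hL : 0 < L := Real.log_pos (one_lt_one_div hq0 hq1)
  set d := L + Real.log c
  -- `ν ε` is the least `n` with `c qⁿ ≤ ε`, so that `log (1 / ε) ≥ n L - d`.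
  set ν : ℝ → ℕ := fun ε => ⌈Real.log (c / ε) / L⌉₊
  set u : ℕ → ℝ := fun n => Real.log (P n) / (n * L - d)
  have hν : Tendsto ν (𝓝[>] 0) atTop := by
    refine tendsto_nat_ceil_atTop.comp (Tendsto.atTop_div_const hL ?_)
    refine Real.tendsto_log_atTop.comp ?_
    have hinv := (tendsto_inv_nhdsGT_zero (𝕜 := ℝ)).const_mul_atTop hc
    simp only [← div_eq_mul_inv] at hinv
    exact hinv
  have hu : Tendsto u atTop (𝓝 (ℓ / L)) := by
    have hden : Tendsto (fun n : ℕ => L - d / n) atTop (𝓝 L) := by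
      simpa using tendsto_const_nhds.sub (tendsto_const_div_atTop_nhds_zero_nat d)
    refine (hP.div hden hL.ne').congr' ?_
    filter_upwards [eventually_ne_atTop 0] with n hn
    simp only [u, Pi.div_apply]
    rw [div_div, mul_sub, mul_div_cancel₀ _ (Nat.cast_ne_zero.2 hn), mul_comm]
  have hdpos : ∀ᶠ ε in 𝓝[>] (0 : ℝ), 0 < ν ε * L - d :=
    hν.eventually (tendsto_natCast_atTop_atTop.atTop_mul_const hL |>.eventually_gt_atTop d)
      |>.mono fun _ h => sub_pos.2 h
  have key : ∀ᶠ ε in 𝓝[>] (0 : ℝ), boxRatio M ε ≤ ENNReal.ofReal (u (ν ε)) := by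
    filter_upwards [hν.eventually hcov, hdpos, self_mem_nhdsWithin,
      nhdsWithin_le_nhds (gt_mem_nhds hc)] with ε hcovε hden (hε : 0 < ε) hεc
    exact boxRatio_le hM (mul_pow_ceil_log_div_le hc hq0 hq1 hε) hcovε hden
      (ceil_log_div_mul_sub_le hc hq0 hq1 hε hεc.le)
  calc fracDim M ≤ limsup (fun ε => ENNReal.ofReal (u (ν ε))) (𝓝[>] 0) :=
        (fracDim_eq_limsup_boxRatio M).trans_le (limsup_le_limsup key)
    _ = ENNReal.ofReal (ℓ / L) :=
      ((ENNReal.continuous_ofReal.tendsto _).comp (hu.comp hν)).limsup_eq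

end FractalDim

section NetOrbit

variable {V : Type*} [DecidableEq V] (f : V → V) (W : ℕ → Finset V)

def netOrbit : ℕ → Finset V
  | 0 => W 0
  | n + 1 => W (n + 1) ∪ (netOrbit n).image f

lemma subset_netOrbit : ∀ n, W n ⊆ netOrbit f W n
  | 0 => subset_rfl
  | _ + 1 => Finset.subset_union_left

lemma coe_subset_iUnion_netOrbit (n : ℕ) : ↑(W n) ⊆ ⋃ m, (netOrbit f W m : Set V) :=
  (Finset.coe_subset.2 (subset_netOrbit f W n)).trans (subset_iUnion_of_subset n subset_rfl)

lemma card_netOrbit_le : ∀ n, (netOrbit f W n).card ≤ ∑ i ∈ Finset.range (n + 1), (W i).card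
  | 0 => by simp [netOrbit]
  | n + 1 => by
    calc (netOrbit f W (n + 1)).card ≤ (W (n + 1)).card + ((netOrbit f W n).image f).card :=
          Finset.card_union_le _ _
      _ ≤ (W (n + 1)).card + ∑ i ∈ Finset.range (n + 1), (W i).card :=
          Nat.add_le_add_left (Finset.card_image_le.trans (card_netOrbit_le n)) _
      _ = ∑ i ∈ Finset.range (n + 2), (W i).card := by
          rw [Finset.sum_range_succ _ (n + 1), add_comm]

lemma image_iUnion_netOrbit_subset :
    f '' ⋃ n, (netOrbit f W n : Set V) ⊆ ⋃ n, (netOrbit f W n : Set V) := by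
  rw [image_iUnion]
  refine iUnion_mono' fun n => ⟨n + 1, ?_⟩
  rw [← Finset.coe_image]
  exact Finset.coe_subset.2 Finset.subset_union_right

variable {f W}

lemma coe_netOrbit_subset {K : ℕ → Set V} (hWK : ∀ n, ↑(W n) ⊆ K n)
    (hfK : ∀ n, f '' K n ⊆ K (n + 1)) : ∀ n, ↑(netOrbit f W n) ⊆ K n
  | 0 => hWK 0
  | n + 1 => by
    rw [netOrbit, Finset.coe_union, Finset.coe_image]
    exact union_subset (hWK _) ((image_mono (coe_netOrbit_subset hWK hfK n)).trans (hfK n))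

end NetOrbit

section NetOrbitCover

variable {V : Type*} [MetricSpace V] [DecidableEq V] {f : V → V} {W : ℕ → Finset V}
  {K : ℕ → Set V} {A : Set V}

lemma subset_closure_iUnion_netOrbit {r : ℕ → ℝ} (hAK : ∀ n, A ⊆ K n)
    (hKW : ∀ n, K n ⊆ ⋃ w ∈ W n, ball w (r n)) (hr : Tendsto r atTop (𝓝 0)) :
    A ⊆ closure (⋃ n, (netOrbit f W n : Set V)) := fun x hx =>
  Metric.mem_closure_iff.2 fun ε hε => by
    obtain ⟨n, hn⟩ := (hr.eventually (gt_mem_nhds hε)).exists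
    obtain ⟨w, hw, hxw⟩ := mem_iUnion₂.1 (hKW n (hAK n hx))
    exact ⟨w, coe_subset_iUnion_netOrbit f W n hw, (mem_ball.1 hxw).trans hn⟩

lemma isCompact_union_iUnion_netOrbit (hA : IsCompact A) (hWK : ∀ n, ↑(W n) ⊆ K n)
    (hfK : ∀ n, f '' K n ⊆ K (n + 1))
    (hKA : Tendsto (fun n => attrDist (K n) A) atTop (𝓝 0)) :
    IsCompact (A ∪ ⋃ n, (netOrbit f W n : Set V)) :=
  isCompact_union_iUnion_of_tendsto_attrDist hA (fun n => (netOrbit f W n).finite_toSet.isCompact)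
    (tendsto_of_tendsto_of_tendsto_of_le_of_le tendsto_const_nhds hKA (fun _ => bot_le)
      fun n => attrDist_mono_left (coe_netOrbit_subset hWK hfK n))

lemma coverN_union_iUnion_netOrbit_le {k n : ℕ} {r : ℝ} (hr : 0 < r) (hWK : ∀ n, ↑(W n) ⊆ K n)
    (hfK : ∀ n, f '' K n ⊆ K (n + 1)) (hK : ∀ m, n + k ≤ m → K m ⊆ K n) (hAK : A ⊆ K n)
    (hKW : K n ⊆ ⋃ w ∈ W n, ball w r) :
    coverN (A ∪ ⋃ m, (netOrbit f W m : Set V)) r ≤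
      ((n + k + 1) * ∑ i ∈ Finset.range (n + k + 1), (W i).card : ℕ) := by
  set F := W n ∪ (Finset.range (n + k)).biUnion (netOrbit f W)
  have hFsub : ↑F ⊆ A ∪ ⋃ m, (netOrbit f W m : Set V) := by
    intro x hx
    rcases Finset.mem_union.1 hx with hx | hx
    · exact Or.inr (coe_subset_iUnion_netOrbit f W n hx)
    · obtain ⟨m, -, hm⟩ := Finset.mem_biUnion.1 hx
      exact Or.inr (mem_iUnion.2 ⟨m, hm⟩)
  have hKF : K n ⊆ ⋃ w ∈ F, ball w r :=
    hKW.trans (biUnion_subset_biUnion_left fun w hw => Finset.mem_union_left _ hw)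
  have hcov : A ∪ ⋃ m, (netOrbit f W m : Set V) ⊆ ⋃ w ∈ F, ball w r := by
    refine union_subset (hAK.trans hKF) (iUnion_subset fun m x hx => ?_)
    by_cases hm : m < n + k
    · refine mem_iUnion₂.2 ⟨x, Finset.mem_union_right _ ?_, mem_ball_self hr⟩
      exact Finset.mem_biUnion.2 ⟨m, Finset.mem_range.2 hm, hx⟩
    · exact hKF (hK m (not_lt.1 hm) (coe_netOrbit_subset hWK hfK m hx))
  have hsum : ∀ m ≤ n + k, (netOrbit f W m).card ≤ ∑ i ∈ Finset.range (n + k + 1), (W i).card :=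
    fun m hm => (card_netOrbit_le f W m).trans
      (Finset.sum_le_sum_of_subset (Finset.range_subset_range.2 (by omega)))
  have hcard : F.card ≤ (n + k + 1) * ∑ i ∈ Finset.range (n + k + 1), (W i).card :=
    calc F.card ≤ (W n).card + ∑ m ∈ Finset.range (n + k), (netOrbit f W m).card :=
          (Finset.card_union_le _ _).trans (Nat.add_le_add_left Finset.card_biUnion_le _)
      _ ≤ ∑ i ∈ Finset.range (n + k + 1), (W i).card +
            (n + k) * ∑ i ∈ Finset.range (n + k + 1), (W i).card := by
          refine Nat.add_le_add ((Finset.card_le_card (subset_netOrbit f W n)).trans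
            (hsum n (by omega))) ?_
          simpa using Finset.sum_le_card_nsmul _ _ _ fun m hm =>
            hsum m (Finset.mem_range.1 hm).le
      _ = (n + k + 1) * ∑ i ∈ Finset.range (n + k + 1), (W i).card := by ring
  exact (coverN_le_card F hFsub hcov).trans (by exact_mod_cast hcard)

lemma coverN_union_iUnion_netOrbit_le_pow {k n : ℕ} {r C h : ℝ} (hr : 0 < r)
    (hWK : ∀ n, ↑(W n) ⊆ K n) (hfK : ∀ n, f '' K n ⊆ K (n + 1))
    (hK : ∀ m, n + k ≤ m → K m ⊆ K n) (hAK : A ⊆ K n) (hKW : K n ⊆ ⋃ w ∈ W n, ball w r)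
    (hC : 0 ≤ C) (hh : 1 ≤ h) (hW : ∀ i, ((W i).card : ℝ) ≤ C * h ^ i) :
    coverN (A ∪ ⋃ m, (netOrbit f W m : Set V)) r ≤
      ENNReal.ofReal (((n + k + 1 : ℕ) : ℝ) ^ 2 * C * h ^ (n + k + 1)) := by
  refine (coverN_union_iUnion_netOrbit_le hr hWK hfK hK hAK hKW).trans ?_
  rw [← ENNReal.ofReal_natCast]
  refine ENNReal.ofReal_le_ofReal ?_
  have hsum := sum_range_le_mul_pow hC hh hW (n + k + 1)
  push_cast at hsum ⊢
  calc ((n : ℝ) + k + 1) * ∑ i ∈ Finset.range (n + k + 1), ((W i).card : ℝ)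
      ≤ ((n : ℝ) + k + 1) * (((n : ℝ) + k + 1) * C * h ^ (n + k + 1)) :=
        mul_le_mul_of_nonneg_left hsum (by positivity)
    _ = ((n : ℝ) + k + 1) ^ 2 * C * h ^ (n + k + 1) := by ring

lemma closure_iUnion_netOrbit_eq {r : ℕ → ℝ} (hA : IsCompact A) (hWK : ∀ n, ↑(W n) ⊆ K n)
    (hfK : ∀ n, f '' K n ⊆ K (n + 1)) (hAK : ∀ n, A ⊆ K n)
    (hKW : ∀ n, K n ⊆ ⋃ w ∈ W n, ball w (r n)) (hr : Tendsto r atTop (𝓝 0))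
    (hKA : Tendsto (fun n => attrDist (K n) A) atTop (𝓝 0)) :
    closure (⋃ n, (netOrbit f W n : Set V)) = A ∪ ⋃ n, (netOrbit f W n : Set V) :=
  subset_antisymm
    ((isCompact_union_iUnion_netOrbit hA hWK hfK hKA).isClosed.closure_subset_iff.2
      subset_union_right)
    (union_subset (subset_closure_iUnion_netOrbit hAK hKW hr) subset_closure)

lemma fracDim_union_iUnion_netOrbit_le {k : ℕ} {c q C h : ℝ} (hA : A.Nonempty)
    (hWK : ∀ n, ↑(W n) ⊆ K n) (hfK : ∀ n, f '' K n ⊆ K (n + 1))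
    (hK : ∀ n m, n + k ≤ m → K m ⊆ K n) (hAK : ∀ n, A ⊆ K n)
    (hKW : ∀ n, K n ⊆ ⋃ w ∈ W n, ball w (c * q ^ n)) (hW : ∀ n, ((W n).card : ℝ) ≤ C * h ^ n)
    (hc : 0 < c) (hq0 : 0 < q) (hq1 : q < 1) (hC : 0 < C) (hh : 1 ≤ h) :
    fracDim (A ∪ ⋃ n, (netOrbit f W n : Set V)) ≤
      ENNReal.ofReal (Real.log h / Real.log (1 / q)) :=
  fracDim_le_of_coverN_le_geometric (hA.mono subset_union_left) hc hq0 hq1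
    (Eventually.of_forall fun n => coverN_union_iUnion_netOrbit_le_pow (by positivity) hWK hfK
      (hK n) (hAK n) (hKW n) hC.le hh hW)
    (tendsto_log_sq_mul_pow_div hC (by positivity) k)

end NetOrbitCover

section Semiflow

variable {V : Type*} {S : ℝ → V → V}

lemma IsSemiflow.image_image (hS : IsSemiflow S) {t s : ℝ} (ht : 0 ≤ t) (hs : 0 ≤ s)
    (G : Set V) : S t '' (S s '' G) = S (t + s) '' G := by
  rw [Set.image_image]
  exact image_congr fun x _ => hS.2 t s ht hs x

lemma IsSemiflow.image_natCast_mul_succ (hS : IsSemiflow S) {T : ℝ} (hT : 0 ≤ T) (n : ℕ)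
    (G : Set V) : S T '' (S (n * T) '' G) = S ((n + 1 : ℕ) * T) '' G := by
  rw [hS.image_image hT (by positivity)]
  push_cast
  ring_nf

lemma IsSemiflow.image_natCast_mul_subset (hS : IsSemiflow S) {B : Set V} {T : ℝ} {k : ℕ}
    (hT : 0 ≤ T) (hB : ∀ t, k * T ≤ t → S t '' B ⊆ B) {n m : ℕ} (hnm : n + k ≤ m) :
    S (m * T) '' B ⊆ S (n * T) '' B := by
  obtain ⟨j, rfl⟩ := Nat.exists_eq_add_of_le hnm
  rw [show ((n + k + j : ℕ) : ℝ) * T = n * T + ((k + j : ℕ) : ℝ) * T by push_cast; ring,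
    ← hS.image_image (by positivity) (by positivity)]
  exact image_mono (hB _ (by gcongr; omega))

end Semiflow

section Attraction

variable {V : Type*} [MetricSpace V] {S : ℝ → V → V}

lemma IsAbsorbingSet.exists_natCast_mul_absorbs {B : Set V} (hB : IsAbsorbingSet S B)
    (hBbdd : IsBounded B) {T : ℝ} (hT : 0 < T) (k₀ : ℕ) :
    ∃ k : ℕ, k₀ ≤ k ∧ ∀ t, k * T ≤ t → S t '' B ⊆ B := by
  obtain ⟨τ, -, hτ⟩ := hB B hBbdd
  obtain ⟨m, hm⟩ := exists_nat_ge (τ / T)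
  refine ⟨max m k₀, le_max_right _ _, fun t ht => hτ t (le_trans ?_ ht)⟩
  exact (div_le_iff₀ hT).1 (hm.trans (by exact_mod_cast le_max_left _ _))

lemma IsGlobalAttr.subset_of_isAbsorbingSet {A B : Set V} (hA : IsGlobalAttr S A)
    (hB : IsAbsorbingSet S B) : A ⊆ B := by
  obtain ⟨t, ht, htB⟩ := hB A hA.2.1.isBounded
  simpa only [hA.2.2.1 t ht] using htB t le_rfl

lemma IsGlobalAttr.subset_image {A B : Set V} (hA : IsGlobalAttr S A) (hAB : A ⊆ B) {t : ℝ}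
    (ht : 0 ≤ t) : A ⊆ S t '' B :=
  (hA.2.2.1 t ht).symm.subset.trans (image_mono hAB)

lemma IsGlobalAttr.tendsto_attrDist_image_natCast_mul {A B : Set V} (hA : IsGlobalAttr S A)
    (hB : IsBounded B) {T : ℝ} (hT : 0 < T) (k : ℕ) :
    Tendsto (fun n : ℕ => attrDist (S ((k + n : ℕ) * T) '' B) A) atTop (𝓝 0) :=
  (hA.2.2.2 B hB).comp ((tendsto_natCast_atTop_atTop.comp
    ((tendsto_add_atTop_nat k).congr fun n => add_comm n k)).atTop_mul_const hT)

lemma expAttractsAt_of_attrDist_le_exp {M : Set V} {ξ κ : ℝ}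
    (h : ∀ G : Set V, IsBounded G → ∃ C : ℝ,
      ∀ᶠ t in atTop, attrDist (S t '' G) M ≤ ENNReal.ofReal (C * Real.exp (-κ * t)))
    (hξ : ξ < κ) : ExpAttractsAt S M ξ := by
  intro G hG
  obtain ⟨C, hC⟩ := h G hG
  have hlim : Tendsto (fun t => ENNReal.ofReal (C * Real.exp ((ξ - κ) * t))) atTop (𝓝 0) := by
    have := (Real.tendsto_exp_atBot.comp
      (tendsto_id.const_mul_atTop_of_neg (sub_neg.2 hξ))).const_mul C
    simpa [Function.comp_def] using (ENNReal.continuous_ofReal.tendsto _).comp this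
  refine tendsto_of_tendsto_of_tendsto_of_le_of_le' tendsto_const_nhds hlim
    (Eventually.of_forall fun _ => bot_le) ?_
  filter_upwards [hC] with t ht
  calc ENNReal.ofReal (Real.exp (ξ * t)) * attrDist (S t '' G) M
      ≤ ENNReal.ofReal (Real.exp (ξ * t)) * ENNReal.ofReal (C * Real.exp (-κ * t)) :=
        mul_le_mul_right ht _
    _ = ENNReal.ofReal (C * Real.exp ((ξ - κ) * t)) := by
        rw [← ENNReal.ofReal_mul (Real.exp_pos _).le, mul_left_comm, ← Real.exp_add]
        ring_nf

lemma IsSemiflow.expAttractsAt_of_attrDist_image_le (hS : IsSemiflow S) {B M : Set V}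
    (hB : IsAbsorbingSet S B) {T C q ξ : ℝ} (hT : 0 < T) (hC : 0 ≤ C) (hq0 : 0 < q)
    (hq1 : q ≤ 1) {n₀ : ℕ}
    (h : ∀ n : ℕ, n₀ ≤ n → attrDist (S (n * T) '' B) M ≤ ENNReal.ofReal (C * q ^ n))
    (hξ : ξ < 1 / T * Real.log (1 / q)) : ExpAttractsAt S M ξ := by
  refine expAttractsAt_of_attrDist_le_exp (fun G hG => ?_) hξ
  obtain ⟨tG, htG0, htG⟩ := hB G hG
  refine ⟨C * Real.exp ((tG / T + 1) * Real.log (1 / q)), ?_⟩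
  filter_upwards [eventually_ge_atTop (tG + n₀ * T)] with t ht
  set ν := ⌊(t - tG) / T⌋₊
  have hlate : 0 ≤ t - tG := by nlinarith [n₀.cast_nonneg (α := ℝ)]
  have hνT : ν * T ≤ t - tG := (le_div_iff₀ hT).1 (Nat.floor_le (div_nonneg hlate hT.le))
  have hν : n₀ ≤ ν := Nat.le_floor ((le_div_iff₀ hT).2 (by linarith))
  have hsub : S t '' G ⊆ S (ν * T) '' B := by
    rw [show t = ν * T + (t - ν * T) by ring, ← hS.image_image (by positivity) (by linarith)]
    exact image_mono (htG _ (by linarith))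
  calc attrDist (S t '' G) M ≤ attrDist (S (ν * T) '' B) M := attrDist_mono_left hsub
    _ ≤ ENNReal.ofReal (C * q ^ ν) := h ν hν
    _ ≤ ENNReal.ofReal (C * Real.exp (((t - tG) / T - 1) * Real.log q)) :=
        ENNReal.ofReal_le_ofReal (mul_le_mul_of_nonneg_left
          (pow_floor_le_exp_mul_log hq0 hq1 _) hC)
    _ = _ := by
        rw [mul_assoc, ← Real.exp_add, one_div q, Real.log_inv]
        congr 2
        field_simp
        congr 1
        ring

end Attraction

section Statement3

variable {V : Type*} [MetricSpace V]

theorem Tdiscrete_exponential_attractor_with_global_attractor_general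
    (S : ℝ → V → V) (hS : IsSemiflow S)
    (A : Set V) (hA : IsGlobalAttr S A)
    (T : ℝ) (hT : 0 < T)
    (B : Set V) (hBbdd : IsBounded B) (hBabs : IsAbsorbingSet S B)
    (k₀ : ℕ) (a b q h : ℝ) (ha : 0 < a) (hb : 0 < b) (hq0 : 0 < q) (hq1 : q < 1)
    (hh : 1 ≤ h) (hcov : CoveringCond S T B k₀ a b q h) :
    ∃ E₀ : Set V, E₀.Countable ∧ E₀ ⊆ B ∧
      A ∪ E₀ = closure E₀ ∧ closure E₀ ⊆ B ∧
      IsDiscExpAttr S T (closure E₀) ∧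
      (∀ ξ : ℝ, 0 < ξ → ξ < 1 / T * Real.log (1 / q) → ExpAttractsAt S (closure E₀) ξ) ∧
      fracDim (closure E₀) ≤ ENNReal.ofReal (Real.log h / Real.log (1 / q)) := by
  classical
  obtain ⟨k₁, hk₀, hk₁⟩ := hBabs.exists_natCast_mul_absorbs hBbdd hT k₀
  set K : ℕ → Set V := fun n => S ((k₁ + n : ℕ) * T) '' B
  have hAB := hA.subset_of_isAbsorbingSet hBabs
  have hfK : ∀ n, S T '' K n ⊆ K (n + 1) := fun n =>
    (hS.image_natCast_mul_succ hT.le (k₁ + n) B).subset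
  have hK : ∀ n m, n + k₁ ≤ m → K m ⊆ K n := fun n m hnm =>
    hS.image_natCast_mul_subset hT.le hk₁ (by omega)
  have hAK : ∀ n, A ⊆ K n := fun n => hA.subset_image hAB (by positivity)
  have hKA : Tendsto (fun n => attrDist (K n) A) atTop (𝓝 0) :=
    hA.tendsto_attrDist_image_natCast_mul hBbdd hT k₁
  choose W hWK hKW hWcard using fun n =>
    exists_finset_card_le_of_coverN_le (by positivity) (hcov (k₁ + n) (by omega))
  have hKW' : ∀ n, K n ⊆ ⋃ w ∈ W n, ball w (a * q ^ k₁ * q ^ n) := by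
    simpa only [mul_assoc, ← pow_add] using hKW
  have hW : ∀ n, ((W n).card : ℝ) ≤ (b + 1) * h ^ k₁ * h ^ n := fun n => by
    rw [mul_assoc, ← pow_add]
    linarith [hWcard n, one_le_pow₀ hh (n := k₁ + n)]
  set E₀ := ⋃ n, (netOrbit (S T) W n : Set V)
  have hcl : closure E₀ = A ∪ E₀ := closure_iUnion_netOrbit_eq hA.2.1 hWK hfK hAK hKW'
    (by simpa using (tendsto_pow_atTop_nhds_zero_of_lt_one hq0.le hq1).const_mul (a * q ^ k₁))
    hKA
  have hE₀B : E₀ ⊆ B := iUnion_subset fun n =>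
    (coe_netOrbit_subset hWK hfK n).trans (hk₁ _ (by gcongr; omega))
  have hattr (ξ : ℝ) (_ : 0 < ξ) (hξ : ξ < 1 / T * Real.log (1 / q)) :
      ExpAttractsAt S (closure E₀) ξ := by
    refine hS.expAttractsAt_of_attrDist_image_le hBabs hT ha.le hq0 hq1.le (n₀ := k₁)
      (fun n hn => ?_) hξ
    obtain ⟨m, rfl⟩ := Nat.exists_eq_add_of_le hn
    exact attrDist_le_of_subset_iUnion_ball
      ((coe_subset_iUnion_netOrbit _ W m).trans subset_closure) (hKW m)
  have hdim := fracDim_union_iUnion_netOrbit_le hA.1 hWK hfK hK hAK hKW' hW (by positivity) hq0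
    hq1 (by positivity) hh
  have hinv : S T '' closure E₀ ⊆ closure E₀ := by
    rw [hcl, image_union, hA.2.2.1 T hT.le]
    exact union_subset_union_right A (image_iUnion_netOrbit_subset _ _)
  have hrate : 0 < 1 / T * Real.log (1 / q) :=
    mul_pos (one_div_pos.2 hT) (Real.log_pos (one_lt_one_div hq0 hq1))
  rw [← hcl] at hdim
  refine ⟨E₀, countable_iUnion fun n => (netOrbit _ W n).countable_toSet, hE₀B, hcl.symm,
    hcl ▸ union_subset hAB hE₀B, ⟨hcl ▸ hA.1.mono subset_union_left,
      hcl ▸ isCompact_union_iUnion_netOrbit hA.2.1 hWK hfK hKA, hinv,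
      ne_top_of_le_ne_top ENNReal.ofReal_ne_top hdim,
      _, half_pos hrate, hattr _ (half_pos hrate) (half_lt_self hrate)⟩, hattr, hdim⟩

theorem Tdiscrete_exponential_attractor_with_global_attractor
    (S : ℝ → V → V) (hS : IsSemiflow S)
    (A : Set V) (hA : IsGlobalAttr S A)
    (T : ℝ) (hT : 0 < T)
    (B : Set V) (hBne : B.Nonempty) (hBbdd : IsBounded B) (hBabs : IsAbsorbingSet S B)
    (k₀ : ℕ) (a b q h : ℝ) (ha : 0 < a) (hb : 0 < b) (hq0 : 0 < q) (hq1 : q < 1)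
    (hh : 1 ≤ h) (hcov : CoveringCond S T B k₀ a b q h) :
    ∃ E₀ : Set V, E₀.Countable ∧ E₀ ⊆ B ∧
      A ∪ E₀ = closure E₀ ∧ closure E₀ ⊆ B ∧
      IsDiscExpAttr S T (closure E₀) ∧
      (∀ ξ : ℝ, 0 < ξ → ξ < 1 / T * Real.log (1 / q) → ExpAttractsAt S (closure E₀) ξ) ∧
      fracDim (closure E₀) ≤ ENNReal.ofReal (Real.log h / Real.log (1 / q)) :=
  Tdiscrete_exponential_attractor_with_global_attractor_general S hS A hA T hT B hBbdd hBabs k₀ a b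
    q h ha hb hq0 hq1 hh hcov

end Statement3
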